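/- arXiv:2308.14901 — 2 statements merged into one kernel-verified Lean document; each statement's English description precedes it below -/
import Mathlib

section
/- Let u, v be finite words over an alphabet, and let d denote Hamming distance on words of equal length. Then d(u v^n, v^n u) ≤ n · d(uv, vu) for every n ≥ 1. -/
/-!
With `w = v^n`, so that `v^(n+1) = v w`, pass from `u v w` to `v w u` through `v u w`: the first step
only turns the prefix `u v` into `v u`, the second only the suffix `u w` into `w u`. The triangle
inequality gives `d(u v w, v w u) ≤ d(uv, vu) + d(uw, wu)`, and induction on `n` finishes.
-/

/-- `wordPow v n` is the word `v` repeated `n` times. -/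
def wordPow {A : Type*} (v : List A) (n : ℕ) : List A := (List.replicate n v).flatten

/-- Hamming distance of two words (of the same length). -/
def hammingDistL {A : Type*} [DecidableEq A] (w x : List A) : ℕ :=
  (List.zipWith (fun a b => if a = b then 0 else 1) w x).sum

theorem wordPow_succ {A : Type*} (v : List A) (n : ℕ) :
    wordPow v (n + 1) = v ++ wordPow v n := by
  simp [wordPow, List.replicate_succ]

section hammingDistL

variable {A : Type*} [DecidableEq A]

@[simp]
theorem hammingDistL_self (w : List A) : hammingDistL w w = 0 := by
  simp [hammingDistL]

theorem hammingDistL_append_left (a w x : List A) :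
    hammingDistL (a ++ w) (a ++ x) = hammingDistL w x := by
  simp only [hammingDistL, List.zipWith_append rfl, List.sum_append]
  simp

theorem hammingDistL_append_right (w x a : List A) (h : w.length = x.length) :
    hammingDistL (w ++ a) (x ++ a) = hammingDistL w x := by
  simp only [hammingDistL, List.zipWith_append h, List.sum_append]
  simp

theorem hammingDistL_triangle (w y x : List A)
    (hwy : w.length = y.length) (hyx : y.length = x.length) :
    hammingDistL w x ≤ hammingDistL w y + hammingDistL y x := by
  induction w generalizing y x with
  | nil => simp [hammingDistL]
  | cons a w ih =>
    obtain _ | ⟨b, y⟩ := y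
    · simp at hwy
    obtain _ | ⟨c, x⟩ := x
    · simp at hyx
    simp only [List.length_cons, Nat.succ_inj] at hwy hyx
    have htail := ih y x hwy hyx
    have hhead : (if a = c then 0 else 1 : ℕ) ≤
        (if a = b then 0 else 1) + (if b = c then 0 else 1) := by
      split_ifs <;> simp_all
    simp only [hammingDistL, List.zipWith_cons_cons, List.sum_cons] at htail ⊢
    omega

theorem hammingDistL_append_swap_le (u v w : List A) :
    hammingDistL (u ++ (v ++ w)) ((v ++ w) ++ u) ≤
      hammingDistL (u ++ v) (v ++ u) + hammingDistL (u ++ w) (w ++ u) := by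
  have hprefix : hammingDistL (u ++ v ++ w) (v ++ u ++ w) = hammingDistL (u ++ v) (v ++ u) :=
    hammingDistL_append_right _ _ _ (by simp [Nat.add_comm])
  have hsuffix : hammingDistL (v ++ u ++ w) (v ++ (w ++ u)) = hammingDistL (u ++ w) (w ++ u) := by
    rw [List.append_assoc, hammingDistL_append_left]
  calc hammingDistL (u ++ (v ++ w)) ((v ++ w) ++ u)
      = hammingDistL (u ++ v ++ w) (v ++ (w ++ u)) := by simp only [List.append_assoc]
    _ ≤ hammingDistL (u ++ v ++ w) (v ++ u ++ w) + hammingDistL (v ++ u ++ w) (v ++ (w ++ u)) :=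
        hammingDistL_triangle _ _ _ (by simp; omega) (by simp; omega)
    _ = _ := by rw [hprefix, hsuffix]

end hammingDistL

theorem stmt11_general {A : Type*} [DecidableEq A] (u v : List A) (n : ℕ) :
    hammingDistL (u ++ wordPow v n) (wordPow v n ++ u) ≤
      n * hammingDistL (u ++ v) (v ++ u) := by
  induction n with
  | zero => simp [wordPow]
  | succ n ih =>
    calc hammingDistL (u ++ wordPow v (n + 1)) (wordPow v (n + 1) ++ u)
        ≤ hammingDistL (u ++ v) (v ++ u) + hammingDistL (u ++ wordPow v n) (wordPow v n ++ u) := by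
          rw [wordPow_succ]
          exact hammingDistL_append_swap_le u v (wordPow v n)
      _ ≤ (n + 1) * hammingDistL (u ++ v) (v ++ u) := by linarith

/-- `d(u v^n, v^n u) ≤ n · d(uv, vu)`. -/
theorem stmt11 {A : Type*} [DecidableEq A] (u v : List A) (n : ℕ) (hn : 1 ≤ n) :
    hammingDistL (u ++ wordPow v n) (wordPow v n ++ u) ≤
      n * hammingDistL (u ++ v) (v ++ u) :=
  stmt11_general u v n
end

section
/- Let ℓ_p ∈ {0,1,…} ∪ {∞} for each prime p. Then the Pontryagin dual of the discrete torsion group Q_{(ℓ_p)}/ℤ, equipped with the dynamics of multiplication by the identity character (i.e., χ ↦ χ·ι where ι(x+ℤ) = exp(2πix)), is isomorphic as a topological dynamical system to the odometer lim← ℤ/(Π_{p ≤ k} p^{min(k,ℓ_p)})ℤ with the +1 map. -/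
/-- The group `ℚ/ℤ`. -/
abbrev RatModInt : Type := ℚ ⧸ AddSubgroup.zmultiples (1 : ℚ)

/-- The quotient map `ℚ → ℚ/ℤ`. -/
def toQZ : ℚ →+ RatModInt := QuotientAddGroup.mk' _

/-- The `(ℓ_p)`-subgroup `Q_{(ℓ_p)}` of `ℚ`. -/
def Qgrp (ℓ : Nat.Primes → ℕ∞) : AddSubgroup ℚ :=
  AddSubgroup.closure
    {x : ℚ | ∃ (p : Nat.Primes) (n : ℕ), (n : ℕ∞) ≤ ℓ p ∧ x = 1 / ((p : ℕ) : ℚ) ^ n}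

/-- The subgroup `Q_{(ℓ_p)}/ℤ` of `ℚ/ℤ`. -/
def Bgrp (ℓ : Nat.Primes → ℕ∞) : AddSubgroup RatModInt := (Qgrp ℓ).map toQZ

/-- Characters of the discrete group `Q_{(ℓ_p)}/ℤ`, with the topology of pointwise
convergence. -/
abbrev CharSpace (ℓ : Nat.Primes → ℕ∞) : Type :=
  {χ : Bgrp ℓ → ℂ // (∀ x y, χ (x + y) = χ x * χ y) ∧ ∀ x, ‖χ x‖ = 1}

instance (n : ℕ) : TopologicalSpace (ZMod n) := ⊥

/-- `Π_{p ≤ k} p^{min(k, ℓ_p)}`. -/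
noncomputable def odoN (ℓ : Nat.Primes → ℕ∞) (k : ℕ) : ℕ :=
  ∏ p ∈ (Finset.range (k + 1)).subtype Nat.Prime, (p : ℕ) ^ (min (k : ℕ∞) (ℓ p)).toNat

/-- The odometer `lim← ℤ/(Π_{p ≤ k} p^{min(k,ℓ_p)})ℤ`. -/
abbrev Odometer (ℓ : Nat.Primes → ℕ∞) : Type :=
  {f : ∀ k : ℕ, ZMod (odoN ℓ k) // ∀ k : ℕ, (((f (k + 1)).val : ℕ) : ZMod (odoN ℓ k)) = f k}

/-!
`Q_{(ℓ_p)}` is the increasing union of the cyclic groups `(1/N_k)ℤ`, `N_k = odoN ℓ k`: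
each generator `1/p^n` lies in one of them, and conversely `1/N_k` is an integer combination
of the `1/p^n` by Bézout. A point `a` of the odometer therefore defines the character
`q + ℤ ↦ exp(2πi q a_k)` for `q ∈ (1/N_k)ℤ`, independently of `k` because
`a_j ≡ a_k mod N_k`. Conversely a character sends `1/N_k + ℤ` to an `N_k`-th root of unity
`exp(2πi a_k/N_k)`, and these `a_k` are compatible. This is a continuous bijection from the
compact odometer onto the Hausdorff dual, hence a homeomorphism, and adding `1` to every `a_k`
multiplies the character by `ι`.
-/

open Complex

noncomputable def expTwoPiI : AddChar ℚ ℂ where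
  toFun q := exp (2 * Real.pi * I * q)
  map_zero_eq_one' := by simp
  map_add_eq_mul' x y := by rw [← exp_add]; push_cast; ring_nf

lemma expTwoPiI_apply (q : ℚ) : expTwoPiI q = exp (2 * Real.pi * I * q) := rfl

lemma expTwoPiI_eq_one_iff {q : ℚ} : expTwoPiI q = 1 ↔ ∃ z : ℤ, q = z := by
  rw [expTwoPiI_apply, exp_eq_one_iff]
  refine exists_congr fun z => ?_
  rw [mul_comm (z : ℂ), mul_right_inj' two_pi_I_ne_zero]
  exact_mod_cast Iff.rfl

lemma expTwoPiI_ne_zero (q : ℚ) : expTwoPiI q ≠ 0 := exp_ne_zero _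

lemma expTwoPiI_eq_iff {x y : ℚ} : expTwoPiI x = expTwoPiI y ↔ ∃ z : ℤ, x - y = z := by
  rw [← expTwoPiI_eq_one_iff, AddChar.map_sub_eq_div, div_eq_one_iff_eq (expTwoPiI_ne_zero y)]

lemma norm_expTwoPiI (q : ℚ) : ‖expTwoPiI q‖ = 1 := by
  rw [expTwoPiI_apply, ← norm_exp_ofReal_mul_I (2 * Real.pi * q)]
  push_cast
  ring_nf

lemma expTwoPiI_mul_natCast_congr {N v w : ℕ} [NeZero N] {x : ℚ}
    (hx : x ∈ AddSubgroup.zmultiples (N : ℚ)⁻¹) (h : (v : ZMod N) = w) :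
    expTwoPiI (x * v) = expTwoPiI (x * w) := by
  obtain ⟨m, rfl⟩ := AddSubgroup.mem_zmultiples_iff.mp hx
  obtain ⟨t, ht⟩ := Nat.modEq_iff_dvd.mp ((ZMod.natCast_eq_natCast_iff _ _ _).mp h)
  rw [expTwoPiI_eq_iff]
  refine ⟨-(m * t), ?_⟩
  have hN : (N : ℚ) ≠ 0 := NeZero.ne _
  have ht' : (w : ℚ) = v + N * t := by exact_mod_cast (sub_eq_iff_eq_add'.mp ht)
  rw [ht', zsmul_eq_mul]
  field_simp
  push_cast
  ring

lemma natCast_eq_of_expTwoPiI_eq {N v w : ℕ} [NeZero N]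
    (h : expTwoPiI ((N : ℚ)⁻¹ * v) = expTwoPiI ((N : ℚ)⁻¹ * w)) : (v : ZMod N) = w := by
  obtain ⟨z, hz⟩ := expTwoPiI_eq_iff.mp h
  rw [ZMod.natCast_eq_natCast_iff, Nat.modEq_iff_dvd]
  refine ⟨-z, ?_⟩
  have hN : (N : ℚ) ≠ 0 := NeZero.ne _
  field_simp at hz
  have : (w : ℚ) - v = N * -z := by linear_combination -hz
  exact_mod_cast this

lemma exists_expTwoPiI_of_pow_eq_one {N : ℕ} [NeZero N] {ζ : ℂ} (h : ζ ^ N = 1) :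
    ∃ i : ℕ, ζ = expTwoPiI ((N : ℚ)⁻¹ * i) := by
  obtain ⟨i, -, rfl⟩ := (isPrimitiveRoot_exp N (NeZero.ne N)).eq_pow_of_pow_eq_one h
  refine ⟨i, ?_⟩
  rw [expTwoPiI_apply, ← exp_nat_mul]
  push_cast
  ring_nf

lemma zmultiples_inv_natCast_le_of_dvd {n m : ℕ} [NeZero m] (h : n ∣ m) :
    AddSubgroup.zmultiples (n : ℚ)⁻¹ ≤ AddSubgroup.zmultiples (m : ℚ)⁻¹ := by
  obtain ⟨c, rfl⟩ := h
  rw [AddSubgroup.zmultiples_le]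
  refine ⟨c, ?_⟩
  have : (c : ℚ) ≠ 0 := by exact_mod_cast right_ne_zero_of_mul (NeZero.ne (n * c))
  simp only [zsmul_eq_mul, Int.cast_natCast, Nat.cast_mul]
  field_simp

lemma inv_natCast_mul_mem_of_coprime {G : AddSubgroup ℚ} {a b : ℕ} (hab : a.Coprime b)
    (ha : (a : ℚ)⁻¹ ∈ G) (hb : (b : ℚ)⁻¹ ∈ G) : ((a * b : ℕ) : ℚ)⁻¹ ∈ G := by
  rcases eq_or_ne a 0 with rfl | ha0
  · simp
  rcases eq_or_ne b 0 with rfl | hb0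
  · simp
  obtain ⟨u, v, huv⟩ := Nat.isCoprime_iff_coprime.mpr hab
  have key : ((a * b : ℕ) : ℚ)⁻¹ = u • (b : ℚ)⁻¹ + v • (a : ℚ)⁻¹ := by
    have huv' : (u : ℚ) * a + v * b = 1 := by exact_mod_cast huv
    simp only [zsmul_eq_mul, Nat.cast_mul]
    field_simp
    linear_combination -huv'
  rw [key]
  exact add_mem (zsmul_mem hb u) (zsmul_mem ha v)

lemma inv_prod_pow_mem {G : AddSubgroup ℚ} (h1 : (1 : ℚ) ∈ G) (s : Finset Nat.Primes)
    (e : Nat.Primes → ℕ) (he : ∀ p ∈ s, (((p : ℕ) ^ e p : ℕ) : ℚ)⁻¹ ∈ G) :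
    ((∏ p ∈ s, (p : ℕ) ^ e p : ℕ) : ℚ)⁻¹ ∈ G := by
  classical
  induction s using Finset.induction with
  | empty => simpa using h1
  | @insert p s hps ih =>
    rw [Finset.prod_insert hps]
    refine inv_natCast_mul_mem_of_coprime ?_ (he p (s.mem_insert_self p))
      (ih fun q hq => he q (Finset.mem_insert_of_mem hq))
    refine Nat.Coprime.prod_right fun q hq => Nat.Coprime.pow _ _ ?_
    exact (Nat.coprime_primes p.2 q.2).mpr fun h => hps (Subtype.ext h ▸ hq)

lemma min_natCast_ne_top (k : ℕ) (x : ℕ∞) : min (k : ℕ∞) x ≠ ⊤ :=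
  ne_top_of_le_ne_top (ENat.natCast_ne_top k) (min_le_left _ _)

section Odometer

variable {ℓ : Nat.Primes → ℕ∞}

instance odoN.neZero (k : ℕ) : NeZero (odoN ℓ k) :=
  ⟨Finset.prod_ne_zero_iff.mpr fun p _ => pow_ne_zero _ p.2.ne_zero⟩

lemma odoN_dvd_odoN {k j : ℕ} (h : k ≤ j) : odoN ℓ k ∣ odoN ℓ j := by
  unfold odoN
  refine (Finset.prod_dvd_prod_of_subset _ _ _ fun p hp => ?_).trans
    (Finset.prod_dvd_prod_of_dvd _ _ fun p _ => pow_dvd_pow _ ?_)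
  · simp only [Finset.mem_subtype, Finset.mem_range] at hp ⊢
    omega
  · exact ENat.toNat_le_toNat (min_le_min_right _ (by exact_mod_cast h))
      (min_natCast_ne_top j _)

lemma pow_dvd_odoN {p : Nat.Primes} {n : ℕ} (hn : (n : ℕ∞) ≤ ℓ p) :
    (p : ℕ) ^ n ∣ odoN ℓ (max (p : ℕ) n) := by
  have hp : p ∈ (Finset.range (max (p : ℕ) n + 1)).subtype Nat.Prime :=
    Finset.mem_subtype.mpr (Finset.mem_range.mpr (by omega))
  refine (pow_dvd_pow _ ?_).trans (Finset.dvd_prod_of_mem _ hp)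
  rw [← ENat.natCast_le_natCast, ENat.natCast_toNat (min_natCast_ne_top _ _)]
  exact le_min (by exact_mod_cast le_max_right _ _) hn

variable (ℓ) in
noncomputable abbrev QgrpLevel (k : ℕ) : AddSubgroup ℚ :=
  AddSubgroup.zmultiples (odoN ℓ k : ℚ)⁻¹

lemma QgrpLevel_mono : Monotone (QgrpLevel ℓ) := fun _ _ h =>
  zmultiples_inv_natCast_le_of_dvd (odoN_dvd_odoN h)

lemma one_mem_Qgrp : (1 : ℚ) ∈ Qgrp ℓ :=
  AddSubgroup.subset_closure ⟨⟨2, Nat.prime_two⟩, 0, by simp, by simp⟩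

lemma inv_odoN_mem_Qgrp (k : ℕ) : (odoN ℓ k : ℚ)⁻¹ ∈ Qgrp ℓ := by
  refine inv_prod_pow_mem one_mem_Qgrp _ _ fun p _ => AddSubgroup.subset_closure ?_
  refine ⟨p, _, ?_, by rw [one_div, Nat.cast_pow]⟩
  rw [ENat.natCast_toNat (min_natCast_ne_top _ _)]
  exact min_le_right _ _

lemma Qgrp_eq_iSup : Qgrp ℓ = ⨆ k, QgrpLevel ℓ k := by
  refine le_antisymm ((AddSubgroup.closure_le _).mpr ?_)
    (iSup_le fun k => (AddSubgroup.zmultiples_le).mpr (inv_odoN_mem_Qgrp k))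
  rintro _ ⟨p, n, hn, rfl⟩
  refine AddSubgroup.mem_iSup_of_mem (max (p : ℕ) n)
    (zmultiples_inv_natCast_le_of_dvd (pow_dvd_odoN hn) ?_)
  rw [one_div, ← Nat.cast_pow]
  exact AddSubgroup.mem_zmultiples _

lemma mem_Qgrp_iff {q : ℚ} : q ∈ Qgrp ℓ ↔ ∃ k, q ∈ QgrpLevel ℓ k := by
  rw [Qgrp_eq_iSup, AddSubgroup.mem_iSup_of_directed QgrpLevel_mono.directed_le]

lemma Odometer.natCast_val_of_le (a : Odometer ℓ) {k j : ℕ} (h : k ≤ j) :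
    ((a.1 j).val : ZMod (odoN ℓ k)) = a.1 k := by
  induction j, h using Nat.le_induction with
  | base => exact ZMod.natCast_zmod_val _
  | succ j hkj ih =>
    rw [← ih, ← a.2 j]
    simp only [ZMod.natCast_val]
    exact (RingHom.congr_fun
      (ZMod.castHom_comp (odoN_dvd_odoN hkj) (odoN_dvd_odoN j.le_succ)) _).symm

noncomputable def Odometer.succ (a : Odometer ℓ) : Odometer ℓ :=
  ⟨fun k => a.1 k + 1, fun k => by
    rw [ZMod.natCast_val, ZMod.cast_add (odoN_dvd_odoN k.le_succ),
      ZMod.cast_one (odoN_dvd_odoN k.le_succ), ← ZMod.natCast_val, a.2 k]⟩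

lemma Odometer.expTwoPiI_mul_val_of_le (a : Odometer ℓ) {x : ℚ} {k j : ℕ}
    (hx : x ∈ QgrpLevel ℓ k) (h : k ≤ j) :
    expTwoPiI (x * (a.1 j).val) = expTwoPiI (x * (a.1 k).val) :=
  expTwoPiI_mul_natCast_congr hx (by rw [a.natCast_val_of_le h, ZMod.natCast_zmod_val])

variable (ℓ) in
def bgrpMk : Qgrp ℓ →+ Bgrp ℓ := toQZ.addSubgroupMap (Qgrp ℓ)

lemma bgrpMk_surjective : Function.Surjective (bgrpMk ℓ) :=
  toQZ.addSubgroupMap_surjective _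

lemma bgrpMk_eq_bgrpMk_iff {q q' : Qgrp ℓ} :
    bgrpMk ℓ q = bgrpMk ℓ q' ↔ ∃ z : ℤ, (q : ℚ) - q' = z := by
  rw [← Subtype.coe_inj]
  change QuotientAddGroup.mk _ = QuotientAddGroup.mk _ ↔ _
  rw [QuotientAddGroup.eq_iff_sub_mem, AddSubgroup.mem_zmultiples_iff]
  simp only [zsmul_one, eq_comm]

variable (ℓ) in
noncomputable def levelGen (k : ℕ) : Qgrp ℓ :=
  ⟨(odoN ℓ k : ℚ)⁻¹, inv_odoN_mem_Qgrp k⟩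

lemma exists_mem_QgrpLevel (q : Qgrp ℓ) : ∃ k, (q : ℚ) ∈ QgrpLevel ℓ k :=
  mem_Qgrp_iff.mp q.2

noncomputable def bgrpLift (b : Bgrp ℓ) : Qgrp ℓ := Function.surjInv bgrpMk_surjective b

lemma bgrpMk_bgrpLift (b : Bgrp ℓ) : bgrpMk ℓ (bgrpLift b) = b :=
  Function.surjInv_eq bgrpMk_surjective b

noncomputable def bgrpLevel (b : Bgrp ℓ) : ℕ := (exists_mem_QgrpLevel (bgrpLift b)).choose

-- `odometerPairing_bgrpMk` shows that the value does not depend on the chosen lift and level.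
noncomputable def odometerPairing (a : Odometer ℓ) (b : Bgrp ℓ) : ℂ :=
  expTwoPiI (bgrpLift b * (a.1 (bgrpLevel b)).val)

lemma odometerPairing_bgrpMk (a : Odometer ℓ) {q : Qgrp ℓ} {k : ℕ}
    (hq : (q : ℚ) ∈ QgrpLevel ℓ k) :
    odometerPairing a (bgrpMk ℓ q) = expTwoPiI (q * (a.1 k).val) := by
  obtain ⟨z, hz⟩ := bgrpMk_eq_bgrpMk_iff.mp (bgrpMk_bgrpLift (bgrpMk ℓ q))
  set q' := bgrpLift (bgrpMk ℓ q)
  set k' := bgrpLevel (bgrpMk ℓ q)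
  have hq' : (q' : ℚ) ∈ QgrpLevel ℓ k' := (exists_mem_QgrpLevel q').choose_spec
  calc expTwoPiI (q' * (a.1 k').val)
      = expTwoPiI (q' * (a.1 (max k k')).val) :=
        (a.expTwoPiI_mul_val_of_le hq' (le_max_right _ _)).symm
    _ = expTwoPiI (q * (a.1 (max k k')).val) :=
        expTwoPiI_eq_iff.mpr ⟨z * (a.1 (max k k')).val, by rw [← sub_mul, hz]; push_cast; rfl⟩
    _ = expTwoPiI (q * (a.1 k).val) := a.expTwoPiI_mul_val_of_le hq (le_max_left _ _)

lemma odometerPairing_add (a : Odometer ℓ) (x y : Bgrp ℓ) :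
    odometerPairing a (x + y) = odometerPairing a x * odometerPairing a y := by
  obtain ⟨q, rfl⟩ := bgrpMk_surjective x
  obtain ⟨q', rfl⟩ := bgrpMk_surjective y
  obtain ⟨k, hk⟩ := exists_mem_QgrpLevel q
  obtain ⟨k', hk'⟩ := exists_mem_QgrpLevel q'
  replace hk := QgrpLevel_mono (le_max_left k k') hk
  replace hk' := QgrpLevel_mono (le_max_right k k') hk'
  rw [← map_add, odometerPairing_bgrpMk a (add_mem hk hk'), odometerPairing_bgrpMk a hk,
    odometerPairing_bgrpMk a hk', AddSubgroup.coe_add, add_mul, AddChar.map_add_eq_mul]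

lemma odometerPairing_succ (a : Odometer ℓ) (q : Qgrp ℓ) :
    odometerPairing a.succ (bgrpMk ℓ q) = odometerPairing a (bgrpMk ℓ q) * expTwoPiI q := by
  obtain ⟨k, hk⟩ := exists_mem_QgrpLevel q
  rw [odometerPairing_bgrpMk a.succ hk, odometerPairing_bgrpMk a hk, ← AddChar.map_add_eq_mul,
    ← mul_add_one, ← Nat.cast_succ]
  refine expTwoPiI_mul_natCast_congr hk ?_
  change (((a.1 k + 1).val : ℕ) : ZMod (odoN ℓ k)) = _
  simp

noncomputable def charOfOdometer (a : Odometer ℓ) : CharSpace ℓ :=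
  ⟨odometerPairing a, odometerPairing_add a, fun _ => norm_expTwoPiI _⟩

lemma continuous_charOfOdometer : Continuous (charOfOdometer (ℓ := ℓ)) := by
  refine Continuous.subtype_mk (continuous_pi fun b => ?_) _
  exact (continuous_of_discreteTopology (f := fun x : ZMod (odoN ℓ (bgrpLevel b)) =>
    expTwoPiI (bgrpLift b * x.val))).comp ((continuous_apply _).comp continuous_subtype_val)

lemma charOfOdometer_injective : Function.Injective (charOfOdometer (ℓ := ℓ)) := by
  intro a a' h
  refine Subtype.ext (funext fun k => ?_)
  have hk : ((levelGen ℓ k : Qgrp ℓ) : ℚ) ∈ QgrpLevel ℓ k := AddSubgroup.mem_zmultiples _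
  have := congrFun (congrArg Subtype.val h) (bgrpMk ℓ (levelGen ℓ k))
  change odometerPairing a _ = odometerPairing a' _ at this
  rw [odometerPairing_bgrpMk a hk, odometerPairing_bgrpMk a' hk] at this
  simpa only [ZMod.natCast_zmod_val] using natCast_eq_of_expTwoPiI_eq this

lemma CharSpace.map_zero_eq_one (χ : CharSpace ℓ) : χ.1 0 = 1 := by
  have hne : χ.1 0 ≠ 0 := by simp [← norm_ne_zero_iff, χ.2.2 0]
  exact (mul_eq_left₀ hne).mp (by rw [← χ.2.1, add_zero])

def CharSpace.toAddChar (χ : CharSpace ℓ) : AddChar (Bgrp ℓ) ℂ where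
  toFun := χ.1
  map_zero_eq_one' := χ.map_zero_eq_one
  map_add_eq_mul' := χ.2.1

lemma CharSpace.apply_bgrpMk_of_apply_levelGen (χ : CharSpace ℓ) {k i : ℕ}
    (hi : χ.1 (bgrpMk ℓ (levelGen ℓ k)) = expTwoPiI ((odoN ℓ k : ℚ)⁻¹ * i))
    {q : Qgrp ℓ} (hq : (q : ℚ) ∈ QgrpLevel ℓ k) :
    χ.1 (bgrpMk ℓ q) = expTwoPiI (q * i) := by
  obtain ⟨m, hm⟩ := AddSubgroup.mem_zmultiples_iff.mp hq
  have hqm : q = m • levelGen ℓ k := Subtype.ext hm.symm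
  change χ.toAddChar _ = _
  rw [hqm, map_zsmul, AddChar.map_zsmul_eq_zpow]
  change χ.1 _ ^ m = _
  rw [hi, ← AddChar.map_zsmul_eq_zpow, AddSubgroup.coe_zsmul, smul_mul_assoc]
  rfl

lemma CharSpace.apply_levelGen_pow_odoN (χ : CharSpace ℓ) (k : ℕ) :
    χ.1 (bgrpMk ℓ (levelGen ℓ k)) ^ odoN ℓ k = 1 := by
  change χ.toAddChar _ ^ _ = _
  rw [← AddChar.map_nsmul_eq_pow, ← map_nsmul]
  have : odoN ℓ k • levelGen ℓ k = ⟨1, one_mem_Qgrp⟩ :=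
    Subtype.ext (by simp [levelGen, nsmul_eq_mul])
  have h0 : bgrpMk ℓ ⟨1, one_mem_Qgrp⟩ = 0 := by
    rw [← map_zero (bgrpMk ℓ), bgrpMk_eq_bgrpMk_iff]
    exact ⟨1, by simp⟩
  rw [this, h0, AddChar.map_zero_eq_one]

lemma charOfOdometer_surjective : Function.Surjective (charOfOdometer (ℓ := ℓ)) := by
  intro χ
  choose i hi using fun k => exists_expTwoPiI_of_pow_eq_one (χ.apply_levelGen_pow_odoN k)
  have hχ : ∀ {k} {q : Qgrp ℓ}, (q : ℚ) ∈ QgrpLevel ℓ k →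
      χ.1 (bgrpMk ℓ q) = expTwoPiI (q * i k) :=
    fun hq => χ.apply_bgrpMk_of_apply_levelGen (hi _) hq
  have hgen (k : ℕ) : ((levelGen ℓ k : Qgrp ℓ) : ℚ) ∈ QgrpLevel ℓ k :=
    AddSubgroup.mem_zmultiples _
  refine ⟨⟨fun k => (i k : ZMod (odoN ℓ k)), fun k => ?_⟩, ?_⟩
  · rw [ZMod.natCast_val, ZMod.cast_natCast (odoN_dvd_odoN k.le_succ)]
    apply natCast_eq_of_expTwoPiI_eq
    exact (hχ (QgrpLevel_mono k.le_succ (hgen k))).symm.trans (hχ (hgen k))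
  · refine Subtype.ext (funext fun b => ?_)
    obtain ⟨q, rfl⟩ := bgrpMk_surjective b
    obtain ⟨k, hk⟩ := exists_mem_QgrpLevel q
    change odometerPairing _ _ = _
    rw [odometerPairing_bgrpMk _ hk, hχ hk]
    exact expTwoPiI_mul_natCast_congr hk (ZMod.natCast_zmod_val _)

instance Odometer.compactSpace : CompactSpace (Odometer ℓ) := by
  refine isCompact_iff_compactSpace.mp (IsClosed.isCompact
    (s := {f : ∀ k, ZMod (odoN ℓ k) |
      ∀ k, (((f (k + 1)).val : ℕ) : ZMod (odoN ℓ k)) = f k}) ?_)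
  rw [Set.ofPred_forall]
  exact isClosed_iInter fun k => isClosed_eq
    ((continuous_of_discreteTopology (f := fun x : ZMod (odoN ℓ (k + 1)) =>
      ((x.val : ℕ) : ZMod (odoN ℓ k)))).comp (continuous_apply (k + 1))) (continuous_apply k)

end Odometer

/-- The dual of `Q_{(ℓ_p)}/ℤ` with the dynamics of multiplication by the identity character
`ι(q + ℤ) = exp(2πiq)` is topologically conjugate to the odometer
`lim← ℤ/(Π_{p ≤ k} p^{min(k,ℓ_p)})ℤ` with the `+1` map. -/
theorem stmt16 (ℓ : Nat.Primes → ℕ∞) (T : CharSpace ℓ → CharSpace ℓ)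
    (hT : ∀ χ : CharSpace ℓ, ∀ (q : ℚ) (hq : q ∈ Qgrp ℓ),
      (T χ).1 ⟨toQZ q, AddSubgroup.mem_map_of_mem toQZ hq⟩ =
        χ.1 ⟨toQZ q, AddSubgroup.mem_map_of_mem toQZ hq⟩ *
          Complex.exp (2 * (Real.pi : ℂ) * Complex.I * ((q : ℚ) : ℂ))) :
    ∃ Φ : CharSpace ℓ ≃ₜ Odometer ℓ,
      ∀ χ : CharSpace ℓ,
        ((Φ (T χ) : Odometer ℓ) : ∀ k : ℕ, ZMod (odoN ℓ k)) =
          fun k => (Φ χ : Odometer ℓ).1 k + 1 := by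
  let Ψ : Odometer ℓ ≃ₜ CharSpace ℓ := continuous_charOfOdometer.homeoOfEquivCompactToT2
    (f := Equiv.ofBijective _ ⟨charOfOdometer_injective, charOfOdometer_surjective⟩)
  have hTΨ (a : Odometer ℓ) : T (Ψ a) = Ψ a.succ := Subtype.ext <| funext fun b => by
    obtain ⟨q, rfl⟩ := bgrpMk_surjective b
    exact (hT _ q q.2).trans (odometerPairing_succ a q).symm
  refine ⟨Ψ.symm, fun χ => ?_⟩
  obtain ⟨a, rfl⟩ := Ψ.surjective χ
  rw [hTΨ, Ψ.symm_apply_apply, Ψ.symm_apply_apply]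
  rfl
end
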